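/- Concavity and derivative bounds for f: With β > 0, the piecewise rate function γ (γ(r) = K₁r for r ≤ R, γ(r) = (−((K₁+K₂)/R)(r−R)+K₁)r for R ≤ r ≤ 2R, γ(r) = −K₂ r for r > 2R, where R > 0, K₁ ≥ 0, K₂ > 0), δ := ∫₀^∞ s e^{(1/(2β))∫₀ˢ γ(v)dv} ds, and f(r) = ∫₀ʳ e^{−(1/(2β))∫₀ᵘ γ(v)dv} ( ∫_u^∞ s e^{(1/(2β))∫₀ˢ γ(v)dv} ds ) du, one has f″(r) ≤ 0 for all r ≥ 0, and consequently 0 ≤ f′(r) ≤ f′(0) = δ for all r ≥ 0, i.e. ‖f′‖_∞ = δ. -/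

import Mathlib

open MeasureTheory Real

/-- The piecewise partially dissipative rate function `γ`. -/
noncomputable def rateGamma (R K₁ K₂ : ℝ) (r : ℝ) : ℝ :=
  if r ≤ R then K₁ * r
  else if r ≤ 2 * R then (-((K₁ + K₂) / R) * (r - R) + K₁) * r
  else -K₂ * r

/-- The constant `δ = ∫₀^∞ s e^{(1/(2β)) ∫₀ˢ γ(v) dv} ds`. -/
noncomputable def deltaConst (β R K₁ K₂ : ℝ) : ℝ :=
  ∫ s in Set.Ioi (0:ℝ),
    s * Real.exp ((1 / (2 * β)) * ∫ v in (0:ℝ)..s, rateGamma R K₁ K₂ v)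

/-- The coupling distance function
`f(r) = ∫₀ʳ e^{−(1/(2β))∫₀ᵘ γ} (∫_u^∞ s e^{(1/(2β))∫₀ˢ γ} ds) du`. -/
noncomputable def couplingF (β R K₁ K₂ : ℝ) (r : ℝ) : ℝ :=
  ∫ u in (0:ℝ)..r,
    Real.exp (-(1 / (2 * β)) * ∫ v in (0:ℝ)..u, rateGamma R K₁ K₂ v) *
      ∫ s in Set.Ioi u,
        s * Real.exp ((1 / (2 * β)) * ∫ v in (0:ℝ)..s, rateGamma R K₁ K₂ v)

/-!
With `c = 1/(2β)` and `G = ∫₀ γ`, `f' = g := e^{-cG} H` where `H(r) = ∫_r^∞ s e^{cG(s)} ds`, so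
`g' = -cγg - r`. Where `γ(r) ≥ 0` this is clearly `≤ 0`. Otherwise, since `γ(v)/v` is
nonincreasing, `γ(v) ≤ a v` on `[r, ∞)` with `a = γ(r)/r < 0`; then `s ≤ γ(s)/a`, so
`H(r) ≤ (ca)⁻¹ ∫_r^∞ (e^{cG})' ≤ e^{cG(r)} / (c(-a))`, which is exactly `g'(r) ≤ 0`.
Hence `g` is nonincreasing on `[0, ∞)`, nonnegative there, and `g(0) = H(0) = δ`.
The same bound on `∫_r^T s e^{cG(s)} ds` also gives the integrability of `s e^{cG(s)}` at `∞`.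
-/

open Set Filter

namespace CouplingDistance

noncomputable def tailMoment (γ : ℝ → ℝ) (c u : ℝ) : ℝ :=
  ∫ s in Ioi u, s * exp (c * ∫ v in (0:ℝ)..s, γ v)

noncomputable def couplingDeriv (γ : ℝ → ℝ) (c u : ℝ) : ℝ :=
  exp (-c * ∫ v in (0:ℝ)..u, γ v) * tailMoment γ c u

noncomputable def couplingFun (γ : ℝ → ℝ) (c r : ℝ) : ℝ :=
  ∫ u in (0:ℝ)..r, couplingDeriv γ c u

variable {γ : ℝ → ℝ} {c : ℝ}

lemma hasDerivAt_exp_mul_integral (hγ : Continuous γ) (c u : ℝ) :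
    HasDerivAt (fun s => exp (c * ∫ v in (0:ℝ)..s, γ v))
      (c * γ u * exp (c * ∫ v in (0:ℝ)..u, γ v)) u := by
  simpa [mul_comm] using (((hγ.integral_hasStrictDerivAt 0 u).hasDerivAt).const_mul c).exp

lemma continuous_moment_integrand (hγ : Continuous γ) (c : ℝ) :
    Continuous fun s => s * exp (c * ∫ v in (0:ℝ)..s, γ v) :=
  continuous_id.mul (continuous_iff_continuousAt.2 fun u =>
    (hasDerivAt_exp_mul_integral hγ c u).continuousAt)

lemma intervalIntegral_moment_le (hγ : Continuous γ) (hc : 0 < c) {a r T : ℝ} (ha : a < 0)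
    (hγa : ∀ v ≥ r, γ v ≤ a * v) (hrT : r ≤ T) :
    ∫ s in r..T, s * exp (c * ∫ v in (0:ℝ)..s, γ v) ≤
      exp (c * ∫ v in (0:ℝ)..r, γ v) / (c * -a) := by
  set E := fun s => exp (c * ∫ v in (0:ℝ)..s, γ v)
  have hE : ∀ s, HasDerivAt E (c * γ s * E s) s := hasDerivAt_exp_mul_integral hγ c
  have hE' : Continuous fun s => c * γ s * E s :=
    (continuous_const.mul hγ).mul (continuous_iff_continuousAt.2 fun s => (hE s).continuousAt)
  have hca : 0 < c * -a := mul_pos hc (neg_pos.2 ha)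
  calc ∫ s in r..T, s * E s
      ≤ ∫ s in r..T, -(c * γ s * E s) / (c * -a) := by
        refine intervalIntegral.integral_mono_on hrT
          ((continuous_moment_integrand hγ c).intervalIntegrable _ _)
          ((hE'.neg.div_const _).intervalIntegrable _ _) fun s hs => ?_
        rw [le_div_iff₀ hca]
        have := mul_le_mul_of_nonneg_right (hγa s hs.1) (exp_pos (c * ∫ v in (0:ℝ)..s, γ v)).le
        nlinarith
    _ = (E r - E T) / (c * -a) := by
        rw [intervalIntegral.integral_div, intervalIntegral.integral_neg,
          intervalIntegral.integral_eq_sub_of_hasDerivAt (fun s _ => hE s)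
            (hE'.intervalIntegrable _ _), neg_sub]
    _ ≤ E r / (c * -a) := by
        gcongr
        exact sub_le_self _ (exp_pos _).le

lemma integrableOn_moment_of_le_mul (hγ : Continuous γ) (hc : 0 < c) {a r : ℝ} (ha : a < 0)
    (hr : 0 ≤ r) (hγa : ∀ v ≥ r, γ v ≤ a * v) :
    IntegrableOn (fun s => s * exp (c * ∫ v in (0:ℝ)..s, γ v)) (Ioi r) := by
  refine integrableOn_Ioi_of_intervalIntegral_norm_bounded
    (exp (c * ∫ v in (0:ℝ)..r, γ v) / (c * -a)) r
    (fun T => (continuous_moment_integrand hγ c).integrableOn_Ioc) tendsto_id ?_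
  filter_upwards [eventually_ge_atTop r] with T hT
  refine le_of_eq_of_le (intervalIntegral.integral_congr fun s hs => ?_)
    (intervalIntegral_moment_le hγ hc ha hγa hT)
  rw [id, uIcc_of_le hT] at hs
  exact Real.norm_of_nonneg (mul_nonneg (hr.trans hs.1) (exp_pos _).le)

lemma tailMoment_le (hγ : Continuous γ) (hc : 0 < c) {a r : ℝ} (ha : a < 0) (hr : 0 ≤ r)
    (hγa : ∀ v ≥ r, γ v ≤ a * v) :
    tailMoment γ c r ≤ exp (c * ∫ v in (0:ℝ)..r, γ v) / (c * -a) :=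
  le_of_tendsto
    (intervalIntegral_tendsto_integral_Ioi r (integrableOn_moment_of_le_mul hγ hc ha hr hγa)
      tendsto_id)
    ((eventually_ge_atTop r).mono fun _ hT => intervalIntegral_moment_le hγ hc ha hγa hT)

lemma apply_le_mul_of_antitoneOn_div (hratio : AntitoneOn (fun v => γ v / v) (Ioi 0)) {r v : ℝ}
    (hr : 0 < r) (hrv : r ≤ v) : γ v ≤ γ r / r * v :=
  (div_le_iff₀ (hr.trans_le hrv)).1 (hratio hr (hr.trans_le hrv) hrv)

lemma integrableOn_moment (hγ : Continuous γ) (hc : 0 < c)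
    (hratio : AntitoneOn (fun v => γ v / v) (Ioi 0)) {r₀ : ℝ} (hr₀ : 0 < r₀) (hγr₀ : γ r₀ < 0)
    (t : ℝ) : IntegrableOn (fun s => s * exp (c * ∫ v in (0:ℝ)..s, γ v)) (Ioi t) :=
  (((continuous_moment_integrand hγ c).integrableOn_Ioc (a := t) (b := r₀)).union
    (integrableOn_moment_of_le_mul hγ hc (div_neg_of_neg_of_pos hγr₀ hr₀) hr₀.le
      fun _ hv => apply_le_mul_of_antitoneOn_div hratio hr₀ hv)).mono_set Ioi_subset_Ioc_union_Ioi

lemma tailMoment_nonneg {r : ℝ} (hr : 0 ≤ r) : 0 ≤ tailMoment γ c r :=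
  setIntegral_nonneg measurableSet_Ioi fun _ hs =>
    mul_nonneg (hr.trans (le_of_lt hs)) (exp_pos _).le

lemma couplingDeriv_nonneg {r : ℝ} (hr : 0 ≤ r) : 0 ≤ couplingDeriv γ c r :=
  mul_nonneg (exp_pos _).le (tailMoment_nonneg hr)

section Integrable

variable (hγ : Continuous γ)
  (hint : ∀ t, IntegrableOn (fun s => s * exp (c * ∫ v in (0:ℝ)..s, γ v)) (Ioi t))
include hγ hint

lemma hasDerivAt_tailMoment (u : ℝ) :
    HasDerivAt (tailMoment γ c) (-(u * exp (c * ∫ v in (0:ℝ)..u, γ v))) u := by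
  have hH : tailMoment γ c = fun u =>
      tailMoment γ c 0 - ∫ s in (0:ℝ)..u, s * exp (c * ∫ v in (0:ℝ)..s, γ v) := by
    funext u
    rw [← intervalIntegral.integral_Ioi_sub_Ioi' (hint 0) (hint u), tailMoment, tailMoment,
      sub_sub_cancel]
  rw [hH]
  exact ((continuous_moment_integrand hγ c).integral_hasStrictDerivAt 0 u).hasDerivAt.const_sub _

lemma hasDerivAt_couplingDeriv (u : ℝ) :
    HasDerivAt (couplingDeriv γ c) (-c * γ u * couplingDeriv γ c u - u) u := by
  refine ((hasDerivAt_exp_mul_integral hγ (-c) u).mul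
    (hasDerivAt_tailMoment hγ hint u)).congr_deriv ?_
  have : exp (-c * ∫ v in (0:ℝ)..u, γ v) * exp (c * ∫ v in (0:ℝ)..u, γ v) = 1 := by
    rw [← exp_add, neg_mul, neg_add_cancel, exp_zero]
  rw [couplingDeriv]
  linear_combination (-u) * this

lemma continuous_couplingDeriv : Continuous (couplingDeriv γ c) :=
  continuous_iff_continuousAt.2 fun u => (hasDerivAt_couplingDeriv hγ hint u).continuousAt

lemma deriv_couplingFun : deriv (couplingFun γ c) = couplingDeriv γ c :=
  funext fun r => (continuous_couplingDeriv hγ hint).deriv_integral _ 0 r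

end Integrable

lemma neg_mul_couplingDeriv_sub_nonpos (hγ : Continuous γ) (hc : 0 < c) (hγ₀ : 0 ≤ γ 0)
    (hratio : AntitoneOn (fun v => γ v / v) (Ioi 0)) {r : ℝ} (hr : 0 ≤ r) :
    -c * γ r * couplingDeriv γ c r - r ≤ 0 := by
  rcases le_or_gt 0 (γ r) with hγr | hγr
  · nlinarith [mul_nonneg (mul_nonneg hc.le hγr) (couplingDeriv_nonneg (γ := γ) (c := c) hr)]
  have hr0 : 0 < r := hr.lt_of_ne (by rintro rfl; linarith)
  have ha : γ r / r < 0 := div_neg_of_neg_of_pos hγr hr0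
  have hH := tailMoment_le hγ hc ha hr fun v hv => apply_le_mul_of_antitoneOn_div hratio hr0 hv
  rw [le_div_iff₀ (mul_pos hc (neg_pos.2 ha))] at hH
  have hγr' : γ r = γ r / r * r := (div_mul_cancel₀ _ hr0.ne').symm
  have hEE : exp (-c * ∫ v in (0:ℝ)..r, γ v) * exp (c * ∫ v in (0:ℝ)..r, γ v) = 1 := by
    rw [← exp_add, neg_mul, neg_add_cancel, exp_zero]
  rw [couplingDeriv, hγr']
  nlinarith [mul_le_mul_of_nonneg_left hH
    (mul_nonneg hr (exp_pos (-c * ∫ v in (0:ℝ)..r, γ v)).le)]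

theorem couplingFun_concave_deriv_bounds (hγ : Continuous γ) (hc : 0 < c) (hγ₀ : 0 ≤ γ 0)
    (hratio : AntitoneOn (fun v => γ v / v) (Ioi 0)) {r₀ : ℝ} (hr₀ : 0 < r₀) (hγr₀ : γ r₀ < 0) :
    (∀ r ≥ (0:ℝ), deriv (deriv (couplingFun γ c)) r ≤ 0) ∧
    deriv (couplingFun γ c) 0 = tailMoment γ c 0 ∧
    ∀ r ≥ (0:ℝ),
      0 ≤ deriv (couplingFun γ c) r ∧ deriv (couplingFun γ c) r ≤ tailMoment γ c 0 := by
  have hint := integrableOn_moment hγ hc hratio hr₀ hγr₀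
  have hg' := hasDerivAt_couplingDeriv hγ hint
  have hconcave : ∀ r ≥ (0:ℝ), deriv (couplingDeriv γ c) r ≤ 0 := fun r hr =>
    (hg' r).deriv ▸ neg_mul_couplingDeriv_sub_nonpos hγ hc hγ₀ hratio hr
  have hanti : AntitoneOn (couplingDeriv γ c) (Ici 0) :=
    antitoneOn_of_deriv_nonpos (convex_Ici 0) (continuous_couplingDeriv hγ hint).continuousOn
      (fun x _ => (hg' x).differentiableAt.differentiableWithinAt)
      fun x hx => hconcave x (interior_subset hx)
  have hg0 : couplingDeriv γ c 0 = tailMoment γ c 0 := by simp [couplingDeriv]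
  rw [deriv_couplingFun hγ hint]
  exact ⟨hconcave, hg0, fun r hr =>
    ⟨couplingDeriv_nonneg hr, hg0 ▸ hanti self_mem_Ici hr hr⟩⟩

end CouplingDistance

section RateGamma

variable {R K₁ K₂ : ℝ}

lemma continuous_rateGamma (hR : 0 < R) : Continuous (rateGamma R K₁ K₂) := by
  refine Continuous.if_le (by fun_prop)
    (Continuous.if_le (by fun_prop) (by fun_prop) (by fun_prop) (by fun_prop) fun x hx => ?_)
    (by fun_prop) (by fun_prop) fun x hx => ?_
  · rw [hx]; field_simp; ring
  · rw [hx, if_pos (by linarith)]; ring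

lemma antitoneOn_rateGamma_div (hR : 0 < R) (hK : 0 ≤ K₁ + K₂) :
    AntitoneOn (fun v => rateGamma R K₁ K₂ v / v) (Ioi 0) := by
  intro r hr v hv hrv
  simp only [mem_Ioi] at hr hv
  rw [div_le_div_iff₀ hv hr]
  have hq : (K₁ + K₂) / R * R = K₁ + K₂ := div_mul_cancel₀ _ hR.ne'
  have hq0 : 0 ≤ (K₁ + K₂) / R := div_nonneg hK hR.le
  unfold rateGamma
  split_ifs <;>
    nlinarith [mul_nonneg hr.le hv.le, mul_nonneg (mul_nonneg hq0 hr.le) hv.le,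
      mul_nonneg (mul_nonneg (mul_nonneg hq0 (sub_nonneg.2 hrv)) hr.le) hv.le]

end RateGamma

/-- Concavity and derivative bounds for `f`: `f″(r) ≤ 0` for all `r ≥ 0`, and
consequently `0 ≤ f′(r) ≤ f′(0) = δ` for all `r ≥ 0`, i.e. `‖f′‖_∞ = δ`. -/
theorem couplingF_concave_deriv_bounds (β R K₁ K₂ : ℝ)
    (hβ : 0 < β) (hR : 0 < R) (hK₁ : 0 ≤ K₁) (hK₂ : 0 < K₂) :
    (∀ r ≥ (0:ℝ), deriv (deriv (couplingF β R K₁ K₂)) r ≤ 0) ∧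
    deriv (couplingF β R K₁ K₂) 0 = deltaConst β R K₁ K₂ ∧
    (∀ r ≥ (0:ℝ),
      0 ≤ deriv (couplingF β R K₁ K₂) r ∧
      deriv (couplingF β R K₁ K₂) r ≤ deltaConst β R K₁ K₂) := by
  have hγ₀ : 0 ≤ rateGamma R K₁ K₂ 0 := by simp [rateGamma, hR.le]
  have hγ₂ : rateGamma R K₁ K₂ (2 * R) < 0 := by
    rw [rateGamma, if_neg (by linarith), if_pos le_rfl]
    field_simp
    nlinarith
  -- `couplingF β R K₁ K₂` and `deltaConst β R K₁ K₂` are definitionally `couplingFun γ c` and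
  -- `tailMoment γ c 0` for `γ = rateGamma R K₁ K₂`, `c = 1 / (2 * β)`.
  exact CouplingDistance.couplingFun_concave_deriv_bounds (continuous_rateGamma hR)
    (by positivity) hγ₀ (antitoneOn_rateGamma_div hR (by linarith)) (by positivity) hγ₂
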